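/- Let X ∈ ℝ^{n×d} with σ_min(X) ≥ c₀√n and n ≥ 2d/c₀², and let Σ_x ⪯ κ²I_d. Let W ∈ ℝ^{N×d}, Z ∈ ℝ^{n×N}, λ̂_N ∈ ℝⁿ, and let a ∈ ℝ^d, b ∈ ℝⁿ satisfy the two interpolation identities (1/N)(XWᵀ + Z)s = y and Xa + b = y, where s ∈ ℝ^N. Then ‖(1/N)Wᵀs − a‖_{Σ_x} ≤ (2κ/(c₀√n)) ‖(1/N)Zs − b‖₂, where ‖u‖_{Σ_x} = ‖Σ_x^{1/2}u‖₂. -/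
import Mathlib


open Matrix

noncomputable def enorm15 {k : ℕ} (v : Fin k → ℝ) : ℝ := Real.sqrt (∑ i, v i ^ 2)

/-- Interpolation trick for the latent linear model (Lemma B.1, abstracted): if
`σ_min(X) ≥ c₀√n`, `n ≥ 2d/c₀²`, `Σₓ ⪯ κ²I_d`, and both predictors interpolate the
data, i.e. `(1/N)(XWᵀ + Z)s = y` and `Xa + b = y`, then
`‖(1/N)Wᵀs − a‖_{Σₓ} ≤ (2κ/(c₀√n)) ‖(1/N)Zs − b‖₂`, where
`‖u‖_{Σₓ} = √(uᵀ Σₓ u)`. -/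
theorem stmt_15
    (n d N : ℕ) (hd : 0 < d) (hN : 0 < N)
    (X : Matrix (Fin n) (Fin d) ℝ)
    (W : Matrix (Fin N) (Fin d) ℝ) (Z : Matrix (Fin n) (Fin N) ℝ)
    (lamN : Fin n → ℝ)
    (s : Fin N → ℝ) (y : Fin n → ℝ) (a : Fin d → ℝ) (b : Fin n → ℝ)
    (Sx : Matrix (Fin d) (Fin d) ℝ) (hSxpsd : Sx.PosSemidef)
    (κ c₀ : ℝ) (hκ : 0 ≤ κ) (hc₀ : 0 < c₀)
    (hSx : ∀ v : Fin d → ℝ, v ⬝ᵥ Sx.mulVec v ≤ κ ^ 2 * ∑ i, v i ^ 2)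
    (hσmin : ∀ v : Fin d → ℝ,
      c₀ * Real.sqrt n * enorm15 v ≤ enorm15 (X.mulVec v))
    (hn : (2 : ℝ) * d / c₀ ^ 2 ≤ n)
    (hinterpN : ((N : ℝ)⁻¹) • ((X * Wᵀ + Z).mulVec s) = y)
    (hinterp : X.mulVec a + b = y) :
    Real.sqrt ((((N : ℝ)⁻¹) • (Wᵀ.mulVec s) - a) ⬝ᵥ
        Sx.mulVec (((N : ℝ)⁻¹) • (Wᵀ.mulVec s) - a)) ≤
      (2 * κ / (c₀ * Real.sqrt n)) * enorm15 (((N : ℝ)⁻¹) • Z.mulVec s - b) := by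
  set u : Fin d → ℝ := ((N : ℝ)⁻¹) • (Wᵀ.mulVec s) - a with hu
  set e : Fin n → ℝ := ((N : ℝ)⁻¹) • Z.mulVec s - b with he
  have hdpos : (0:ℝ) < 2 * d / c₀ ^ 2 := by positivity
  have hn0 : 0 < (n : ℝ) := lt_of_lt_of_le hdpos hn
  have hcs : 0 < c₀ * Real.sqrt n := by positivity
  -- X u = -e
  have hXu : X.mulVec u = -e := by
    have h1 : X.mulVec u + e = 0 := by
      have h2 : ((N : ℝ)⁻¹) • ((X * Wᵀ).mulVec s) + ((N : ℝ)⁻¹) • (Z.mulVec s) = y := by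
        rw [← smul_add, ← Matrix.add_mulVec]; exact hinterpN
      have h3 : X.mulVec (((N : ℝ)⁻¹) • (Wᵀ.mulVec s))
          = ((N : ℝ)⁻¹) • ((X * Wᵀ).mulVec s) := by
        rw [Matrix.mulVec_smul, Matrix.mulVec_mulVec]
      calc X.mulVec u + e
          = (X.mulVec (((N : ℝ)⁻¹) • (Wᵀ.mulVec s)) - X.mulVec a)
            + (((N : ℝ)⁻¹) • Z.mulVec s - b) := by
            rw [hu, he, Matrix.mulVec_sub]
        _ = (((N : ℝ)⁻¹) • ((X * Wᵀ).mulVec s) + ((N : ℝ)⁻¹) • (Z.mulVec s))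
            - (X.mulVec a + b) := by rw [h3]; abel
        _ = 0 := by rw [h2, hinterp, sub_self]
    exact eq_neg_of_add_eq_zero_left h1
  -- norms
  have hnorm_eq : enorm15 (X.mulVec u) = enorm15 e := by
    rw [hXu]; unfold enorm15; congr 1; apply Finset.sum_congr rfl
    intro i _; simp [Pi.neg_apply]
  have h1 : c₀ * Real.sqrt n * enorm15 u ≤ enorm15 e := by
    rw [← hnorm_eq]; exact hσmin u
  have hue : 0 ≤ enorm15 e := Real.sqrt_nonneg _
  have huu : 0 ≤ enorm15 u := Real.sqrt_nonneg _
  have hSq : Real.sqrt (u ⬝ᵥ Sx.mulVec u) ≤ κ * enorm15 u := by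
    have h2 := hSx u
    calc Real.sqrt (u ⬝ᵥ Sx.mulVec u) ≤ Real.sqrt (κ ^ 2 * ∑ i, u i ^ 2) :=
          Real.sqrt_le_sqrt h2
      _ = κ * enorm15 u := by
          rw [Real.sqrt_mul (sq_nonneg κ), Real.sqrt_sq hκ]; rfl
  have hub : enorm15 u ≤ enorm15 e / (c₀ * Real.sqrt n) := by
    rw [le_div_iff₀ hcs]; linarith [h1, mul_comm (enorm15 u) (c₀ * Real.sqrt n)]
  calc Real.sqrt (u ⬝ᵥ Sx.mulVec u) ≤ κ * enorm15 u := hSq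
    _ ≤ κ * (enorm15 e / (c₀ * Real.sqrt n)) := by
        exact mul_le_mul_of_nonneg_left hub hκ
    _ = (κ / (c₀ * Real.sqrt n)) * enorm15 e := by ring
    _ ≤ (2 * κ / (c₀ * Real.sqrt n)) * enorm15 e := by
        apply mul_le_mul_of_nonneg_right _ hue
        gcongr
        linarith
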